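/- arXiv:2501.09995 — 12 statements merged into one kernel-verified Lean document; each statement's English description precedes it below -/
import Mathlib

section
/- Let r and ω be real numbers with 0 < r < 1 and 0 < ω < 2. Then every complex root α of the quadratic equation α² − rωα + (ω − 1) = 0 satisfies |α| < 1. -/
/-!
Split a root `z = x + iy` of the real quadratic `p(z) = z² - bz + c` into real and imaginary parts.
If `y ≠ 0` the imaginary part forces `x = b/2`, and then the real part gives `|z|² = c`:
the roots are a conjugate pair whose product is `c`. If `y = 0`, the conditions
`p(1) = 1 - b + c > 0` and `p(-1) = 1 + b + c > 0`, together with `|b| < 2`, keep the real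
roots inside `(-1, 1)`. For the SOR quadratic, `b = rω` and `c = ω - 1`.
-/

lemma abs_lt_one_of_sq_sub_mul_add_eq_zero {b c x : ℝ} (hc : c < 1) (hb : |b| < 1 + c)
    (h : x ^ 2 - b * x + c = 0) : |x| < 1 := by
  obtain ⟨hb₁, hb₂⟩ := abs_lt.mp hb
  refine abs_lt.mpr ⟨?_, ?_⟩
  · by_contra! hx
    have : 0 ≤ (x + 1) * (x - 1 + b) := mul_nonneg_of_nonpos_of_nonpos (by linarith) (by linarith)
    nlinarith
  · by_contra! hx
    have : 0 ≤ (x - 1) * (x + 1 - b) := mul_nonneg (by linarith) (by linarith)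
    nlinarith

namespace Complex

lemma re_im_eq_zero_of_sq_sub_mul_add_eq_zero {b c : ℝ} {z : ℂ}
    (h : z ^ 2 - b * z + c = 0) :
    z.re ^ 2 - z.im ^ 2 - b * z.re + c = 0 ∧ (2 * z.re - b) * z.im = 0 := by
  constructor
  · simpa [sq] using congrArg re h
  · have := congrArg im h
    simp only [sq, sub_im, add_im, mul_im, ofReal_re, ofReal_im, zero_im] at this
    linarith

lemma normSq_eq_of_sq_sub_mul_add_eq_zero {b c : ℝ} {z : ℂ}
    (h : z ^ 2 - b * z + c = 0) (him : z.im ≠ 0) : normSq z = c := by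
  obtain ⟨hre, him'⟩ := re_im_eq_zero_of_sq_sub_mul_add_eq_zero h
  have hb : b = 2 * z.re := by
    linarith [(mul_eq_zero.mp him').resolve_right him]
  rw [normSq_apply]
  subst hb
  linarith

/-- The Schur–Cohn (Jury) condition for a real monic quadratic. -/
theorem norm_lt_one_of_sq_sub_mul_add_eq_zero {b c : ℝ} (hc : c < 1)
    (hb : |b| < 1 + c) {z : ℂ} (h : z ^ 2 - b * z + c = 0) : ‖z‖ < 1 := by
  by_cases him : z.im = 0
  · have hz : z = (z.re : ℂ) := ext rfl (by simp [him])
    rw [hz, norm_real, Real.norm_eq_abs]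
    refine abs_lt_one_of_sq_sub_mul_add_eq_zero hc hb ?_
    rw [hz] at h
    exact_mod_cast h
  · rw [← sq_lt_one_iff₀ (norm_nonneg z), Complex.sq_norm,
      normSq_eq_of_sq_sub_mul_add_eq_zero h him]
    exact hc

end Complex

/-- Every complex root `α` of the SOR characteristic quadratic
`α² − rωα + (ω − 1) = 0` with `0 < r < 1` and `0 < ω < 2` satisfies `|α| < 1`. -/
theorem sor_quadratic_roots_lt_one
    (r ω : ℝ) (hr0 : 0 < r) (hr1 : r < 1) (hω0 : 0 < ω) (hω2 : ω < 2)
    (α : ℂ) (hα : α ^ 2 - (r : ℂ) * (ω : ℂ) * α + ((ω : ℂ) - 1) = 0) :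
    ‖α‖ < 1 := by
  have hb : |r * ω| < 1 + (ω - 1) :=
    abs_lt.mpr ⟨by nlinarith, by nlinarith⟩
  refine Complex.norm_lt_one_of_sq_sub_mul_add_eq_zero (by linarith) hb ?_
  exact_mod_cast hα
end

section
/- Let r be a real number with 0 < r < 1 and set ω* = 2/(1 + √(1 − r²)). Then for every real ω with 0 < ω < 2 there exists a complex root α of α² − rωα + (ω − 1) = 0 with |α|² ≥ ω* − 1. Hence the spectral radius ω* − 1 attained at ω = ω* is optimal: no choice of ω in (0,2) makes both roots smaller in modulus than √(ω* − 1). -/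
/-!
Write `t = √(1 - r²)`, so that `ω* = 2 / (1 + t)` and `ω* - 1 = s²` with `s = r / (1 + t)`.
If `ω ≤ ω*`, the quadratic is nonpositive at the real point `s`, so it has a real root `α ≥ s ≥ 0`.
If `ω* ≤ ω`, the two complex roots have product `ω - 1`, so one of them has `|α|² ≥ ω - 1 ≥ ω* - 1`.
-/

theorem exists_real_quadratic_root_ge_of_nonpos {p q x : ℝ} (hx : x ^ 2 - p * x + q ≤ 0) :
    ∃ α : ℝ, α ^ 2 - p * α + q = 0 ∧ x ≤ α := by
  have hD : (2 * x - p) ^ 2 ≤ p ^ 2 - 4 * q := by linarith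
  have hD0 : 0 ≤ p ^ 2 - 4 * q := (sq_nonneg _).trans hD
  refine ⟨(p + √(p ^ 2 - 4 * q)) / 2, ?_, ?_⟩
  · linear_combination Real.sq_sqrt hD0 / 4
  · have := Real.abs_le_sqrt hD
    linarith [le_abs_self (2 * x - p)]

/-- The roots `α` and `p - α` have product `q`, so they cannot both have `‖·‖² < ‖q‖`. -/
theorem exists_quadratic_root_norm_le_sq_norm {K : Type*} [NormedField K] {p q α : K}
    (hα : α ^ 2 - p * α + q = 0) : ∃ β : K, β ^ 2 - p * β + q = 0 ∧ ‖q‖ ≤ ‖β‖ ^ 2 := by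
  have hβ : (p - α) ^ 2 - p * (p - α) + q = 0 := by linear_combination hα
  have hprod : ‖α‖ * ‖p - α‖ = ‖q‖ := by
    rw [← norm_mul]
    congr 1
    linear_combination -hα
  by_contra! h
  nlinarith [h α hα, h (p - α) hβ, norm_nonneg α, norm_nonneg (p - α)]

theorem Complex.exists_quadratic_root (p q : ℂ) : ∃ α : ℂ, α ^ 2 - p * α + q = 0 := by
  obtain ⟨α, hα⟩ :=
    exists_quadratic_eq_zero one_ne_zero (IsAlgClosed.exists_eq_mul_self (discrim 1 (-p) q))
  exact ⟨α, by linear_combination hα⟩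

theorem sor_quadratic_at_critical_root {r t : ℝ} (ω : ℝ) (hrt : r ^ 2 = 1 - t ^ 2)
    (ht : 0 < 1 + t) :
    (r / (1 + t)) ^ 2 - r * ω * (r / (1 + t)) + (ω - 1) = t * (ω * (1 + t) - 2) / (1 + t) := by
  field_simp
  linear_combination (1 - ω * (1 + t)) * hrt

theorem sor_critical_root_sq {r t : ℝ} (hrt : r ^ 2 = 1 - t ^ 2) (ht : 0 < 1 + t) :
    (r / (1 + t)) ^ 2 = 2 / (1 + t) - 1 := by
  field_simp
  linear_combination hrt

/-- For `0 < r < 1` and `ω* = 2/(1 + √(1 − r²))`: for every `ω ∈ (0, 2)` there is a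
complex root `α` of `α² − rωα + (ω − 1) = 0` with `|α|² ≥ ω* − 1`; i.e. the spectral
radius `ω* − 1` attained at `ω = ω*` is optimal. -/
theorem sor_optimal_relaxation_is_optimal
    (r : ℝ) (hr0 : 0 < r) (hr1 : r < 1)
    (ωs : ℝ) (hωs : ωs = 2 / (1 + Real.sqrt (1 - r ^ 2))) :
    ∀ ω : ℝ, 0 < ω → ω < 2 →
      ∃ α : ℂ, α ^ 2 - (r : ℂ) * (ω : ℂ) * α + ((ω : ℂ) - 1) = 0 ∧
        ωs - 1 ≤ ‖α‖ ^ 2 := by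
  intro ω _ _
  set t := √(1 - r ^ 2)
  have ht0 : 0 ≤ t := Real.sqrt_nonneg _
  have ht1 : 0 < 1 + t := by linarith
  have hrt : r ^ 2 = 1 - t ^ 2 := by rw [Real.sq_sqrt (by nlinarith)]; ring
  rcases le_total ω ωs with hle | hge
  · have hω : ω * (1 + t) ≤ 2 := by rwa [hωs, le_div_iff₀ ht1] at hle
    have hneg : (r / (1 + t)) ^ 2 - r * ω * (r / (1 + t)) + (ω - 1) ≤ 0 := by
      rw [sor_quadratic_at_critical_root ω hrt ht1]
      exact div_nonpos_of_nonpos_of_nonneg (mul_nonpos_of_nonneg_of_nonpos ht0 (by linarith)) ht1.le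
    obtain ⟨α, hα, hsα⟩ := exists_real_quadratic_root_ge_of_nonpos hneg
    refine ⟨α, by exact_mod_cast hα, ?_⟩
    rw [Complex.norm_real, Real.norm_eq_abs, sq_abs, hωs, ← sor_critical_root_sq hrt ht1]
    exact pow_le_pow_left₀ (by positivity) hsα 2
  · obtain ⟨α, hα⟩ := Complex.exists_quadratic_root (r * ω) (ω - 1)
    obtain ⟨β, hβ, hnorm⟩ := exists_quadratic_root_norm_le_sq_norm hα
    refine ⟨β, hβ, ?_⟩
    have : ‖(ω : ℂ) - 1‖ = |ω - 1| := by exact_mod_cast Complex.norm_real (ω - 1)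
    linarith [le_abs_self (ω - 1)]
end

section
/- Let β > 0 and ω be real numbers, let Nx, Ny be positive integers, let nx, ny be integers, and set θx = nxπ/Nx, θy = nyπ/Ny and r = (cos θx + β² cos θy)/(1 + β²). Let α be a complex number satisfying α² − rωα + (ω − 1) = 0, and define w(i,j) = α^{i+j} · sin(i θx) · sin(j θy) for natural numbers i, j. Then: (a) for all i ≥ 1 and j ≥ 1, α² w(i,j) = (1 − ω) w(i,j) + (ω/(2(1 + β²))) · (α² w(i−1,j) + w(i+1,j) + β² (α² w(i,j−1) + w(i,j+1))); and (b) w(0,j) = w(Nx,j) = w(i,0) = w(i,Ny) = 0 for all i, j. -/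
/-!
Along each coordinate, `i ↦ αⁱ sin(iθ)` turns the SOR neighbour combination `α² u(i-1) + u(i+1)`
into `2α cos θ · u(i)`, by the sine addition formula. For the product `w` the update therefore
reduces to `α² = (1 - ω) + ω α r`, the quadratic satisfied by `α`. The boundary values vanish
because `Nx θx` and `Ny θy` are integer multiples of `π`.
-/

open Real

lemma Real.sin_sub_add_sin_add (x θ : ℝ) : sin (x - θ) + sin (x + θ) = 2 * cos θ * sin x := by
  rw [sin_sub, sin_add]
  ring

lemma Real.sin_natCast_mul_intCast_mul_pi_div (N : ℕ) (n : ℤ) : sin (N * (n * π / N)) = 0 := by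
  rcases eq_or_ne N 0 with rfl | hN
  · simp
  · rw [mul_div_cancel₀ _ (Nat.cast_ne_zero.mpr hN)]
    exact sin_int_mul_pi n

noncomputable def sorMode (α : ℂ) (θ : ℝ) (i : ℕ) : ℂ := α ^ i * (sin (i * θ) : ℂ)

lemma sorMode_neighbour_sum (α : ℂ) (θ : ℝ) {i : ℕ} (hi : 1 ≤ i) :
    α ^ 2 * sorMode α θ (i - 1) + sorMode α θ (i + 1) = 2 * cos θ * α * sorMode α θ i := by
  obtain ⟨k, rfl⟩ : ∃ k, i = k + 1 := ⟨i - 1, by omega⟩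
  have hsin : sin (k * θ) + sin ((k + 1 + 1 : ℕ) * θ) = 2 * cos θ * sin ((k + 1 : ℕ) * θ) := by
    rw [← sin_sub_add_sin_add]
    push_cast
    ring_nf
  have hsin_complex : (sin (k * θ) : ℂ) + (sin ((k + 1 + 1 : ℕ) * θ) : ℂ)
      = 2 * (cos θ : ℂ) * (sin ((k + 1 : ℕ) * θ) : ℂ) := by
    exact_mod_cast hsin
  rw [Nat.add_sub_cancel]
  unfold sorMode
  linear_combination α ^ (k + 2) * hsin_complex

theorem point_sor_second_order_eigenrelation_general
    (β ω : ℝ)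
    (Nx Ny : ℕ)
    (nx ny : ℤ)
    (θx θy r : ℝ)
    (hθx : θx = nx * Real.pi / Nx) (hθy : θy = ny * Real.pi / Ny)
    (hr : r = (Real.cos θx + β ^ 2 * Real.cos θy) / (1 + β ^ 2))
    (α : ℂ) (hα : α ^ 2 - (r : ℂ) * (ω : ℂ) * α + ((ω : ℂ) - 1) = 0)
    (w : ℕ → ℕ → ℂ)
    (hw : ∀ i j : ℕ,
      w i j = α ^ (i + j) * (Real.sin (i * θx) : ℂ) * (Real.sin (j * θy) : ℂ)) :
    (∀ i j : ℕ, 1 ≤ i → 1 ≤ j →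
      α ^ 2 * w i j
        = (1 - (ω : ℂ)) * w i j
          + ((ω : ℂ) / (2 * (1 + (β : ℂ) ^ 2)))
            * (α ^ 2 * w (i - 1) j + w (i + 1) j
              + (β : ℂ) ^ 2 * (α ^ 2 * w i (j - 1) + w i (j + 1)))) ∧
    (∀ i j : ℕ, w 0 j = 0 ∧ w Nx j = 0 ∧ w i 0 = 0 ∧ w i Ny = 0) := by
  have hw_mode : ∀ i j, w i j = sorMode α θx i * sorMode α θy j := fun i j ↦ by
    rw [hw, sorMode, sorMode, pow_add]
    ring
  have h_denom : (1 : ℂ) + (β : ℂ) ^ 2 ≠ 0 := by exact_mod_cast (by positivity : (1 : ℝ) + β ^ 2 ≠ 0)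
  have hr_clear : (r : ℂ) * (1 + (β : ℂ) ^ 2) = cos θx + (β : ℂ) ^ 2 * cos θy := by
    have : r * (1 + β ^ 2) = cos θx + β ^ 2 * cos θy := by
      rw [hr]
      field_simp
    exact_mod_cast this
  refine ⟨fun i j hi hj ↦ ?_, fun i j ↦ ?_⟩
  · have hx := sorMode_neighbour_sum α θx hi
    have hy := sorMode_neighbour_sum α θy hj
    simp only [hw_mode]
    field_simp
    linear_combination sorMode α θx i * sorMode α θy j * (2 * (1 + (β : ℂ) ^ 2) * hα
      + 2 * ω * α * hr_clear) - ω * sorMode α θy j * hx - ω * β ^ 2 * sorMode α θx i * hy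
  · have hx : sin (Nx * θx) = 0 := hθx ▸ sin_natCast_mul_intCast_mul_pi_div Nx nx
    have hy : sin (Ny * θy) = 0 := hθy ▸ sin_natCast_mul_intCast_mul_pi_div Ny ny
    simp [hw, hx, hy]

/-- Separated-variables eigenfunction relation for the point SOR iteration of the
central second-order discretization of the Poisson equation, together with the
homogeneous Dirichlet boundary values. -/
theorem point_sor_second_order_eigenrelation
    (β ω : ℝ) (hβ : 0 < β)
    (Nx Ny : ℕ) (hNx : 0 < Nx) (hNy : 0 < Ny)
    (nx ny : ℤ)
    (θx θy r : ℝ)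
    (hθx : θx = nx * Real.pi / Nx) (hθy : θy = ny * Real.pi / Ny)
    (hr : r = (Real.cos θx + β ^ 2 * Real.cos θy) / (1 + β ^ 2))
    (α : ℂ) (hα : α ^ 2 - (r : ℂ) * (ω : ℂ) * α + ((ω : ℂ) - 1) = 0)
    (w : ℕ → ℕ → ℂ)
    (hw : ∀ i j : ℕ,
      w i j = α ^ (i + j) * (Real.sin (i * θx) : ℂ) * (Real.sin (j * θy) : ℂ)) :
    (∀ i j : ℕ, 1 ≤ i → 1 ≤ j →
      α ^ 2 * w i j
        = (1 - (ω : ℂ)) * w i j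
          + ((ω : ℂ) / (2 * (1 + (β : ℂ) ^ 2)))
            * (α ^ 2 * w (i - 1) j + w (i + 1) j
              + (β : ℂ) ^ 2 * (α ^ 2 * w i (j - 1) + w i (j + 1)))) ∧
    (∀ i j : ℕ, w 0 j = 0 ∧ w Nx j = 0 ∧ w i 0 = 0 ∧ w i Ny = 0) :=
  point_sor_second_order_eigenrelation_general β ω Nx Ny nx ny θx θy r hθx hθy hr α hα w hw
end

section
/- Let β > 0 and ω be real numbers, let Nx, Ny be positive integers, let nx, ny be integers, and set θx = nxπ/Nx, θy = nyπ/Ny and r = ((5β² − 1 + (1 + β²) cos θx)/(5(1 + β²) − (5 − β²) cos θx)) · cos θy. Let α be a complex number satisfying α² − rωα + (ω − 1) = 0, and define w(i,j) = α^{j} · sin(i θx) · sin(j θy) for natural numbers i, j. Then for all i ≥ 1 and j ≥ 1: α² (20(1 + β²) w(i,j) − (10 − 2β²)(w(i−1,j) + w(i+1,j))) = (1 − ω)(20(1 + β²) w(i,j) − (10 − 2β²)(w(i−1,j) + w(i+1,j))) + ω ((10β² − 2)(α² w(i,j−1) + w(i,j+1)) + (1 + β²)(α²(w(i−1,j−1)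 + w(i+1,j−1)) + w(i−1,j+1) + w(i+1,j+1))). -/
/-!
With `s i = sin (i θx)` and `t j = sin (j θy)` one has `s (i-1) + s (i+1) = 2 cos θx · s i`, and
likewise for `t`. Hence the row operator acts on the mode `w i j = α^j s i t j` as multiplication by
`4 D`, and the coupling terms (with the factors `α²` from the time level) as multiplication by
`4 α N cos θy`, where `r = N / D · cos θy`. The relation thus reduces to
`(α² - 1 + ω) D = ω α N cos θy`, which is the quadratic equation for `α` multiplied by `D`.
-/

open Real

theorem sin_pred_mul_add_sin_succ_mul (θ : ℝ) {i : ℕ} (hi : 1 ≤ i) :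
    sin ((i - 1 : ℕ) * θ) + sin ((i + 1 : ℕ) * θ) = 2 * cos θ * sin (i * θ) := by
  rw [Nat.cast_sub hi, Nat.cast_add, Nat.cast_one, sub_mul, add_mul, one_mul, sin_sub, sin_add]
  ring

/-- `5 (1 + β²) - (5 - β²) cos θ = 5 (1 - cos θ) + β² (5 + cos θ)` vanishes only for `β = 0`,
`cos θ = 1`, where the numerator of `r` vanishes too. -/
theorem hoc_numerator_eq_zero_of_denominator_eq_zero {β θ : ℝ}
    (h : 5 * (1 + β ^ 2) - (5 - β ^ 2) * cos θ = 0) :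
    5 * β ^ 2 - 1 + (1 + β ^ 2) * cos θ = 0 := by
  have h5 : 0 ≤ 5 + cos θ := by linarith [neg_one_le_cos θ]
  nlinarith [cos_le_one θ, mul_nonneg (sq_nonneg β) h5]

section Stencil

variable {R : Type*} [CommRing R] {α b c d : R} {s t : ℕ → R} {w : ℕ → ℕ → R} {i j : ℕ}

theorem hoc_row_apply (hw : ∀ i j, w i j = α ^ j * s i * t j)
    (hs : s (i - 1) + s (i + 1) = 2 * c * s i) :
    20 * (1 + b ^ 2) * w i j - (10 - 2 * b ^ 2) * (w (i - 1) j + w (i + 1) j)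
      = 4 * (5 * (1 + b ^ 2) - (5 - b ^ 2) * c) * w i j := by
  simp only [hw]
  linear_combination (-(10 - 2 * b ^ 2) * α ^ j * t j) * hs

theorem hoc_coupling_apply (hw : ∀ i j, w i j = α ^ j * s i * t j)
    (hs : s (i - 1) + s (i + 1) = 2 * c * s i) (ht : t (j - 1) + t (j + 1) = 2 * d * t j)
    (hj : 1 ≤ j) :
    (10 * b ^ 2 - 2) * (α ^ 2 * w i (j - 1) + w i (j + 1))
        + (1 + b ^ 2) * (α ^ 2 * (w (i - 1) (j - 1) + w (i + 1) (j - 1))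
          + w (i - 1) (j + 1) + w (i + 1) (j + 1))
      = 4 * (5 * b ^ 2 - 1 + (1 + b ^ 2) * c) * d * α * w i j := by
  obtain ⟨k, rfl⟩ := Nat.exists_eq_add_of_le' hj
  simp only [hw, Nat.add_sub_cancel] at ht ⊢
  linear_combination
    (α ^ (k + 2) * ((10 * b ^ 2 - 2) * s i + (1 + b ^ 2) * (s (i - 1) + s (i + 1)))) * ht
      + (2 * α ^ (k + 2) * d * t (k + 1) * (1 + b ^ 2)) * hs

end Stencil

theorem line_sor_hoc_eigenrelation_general
    (β ω : ℝ)
    (θx θy r : ℝ)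
    (hr : r = (5 * β ^ 2 - 1 + (1 + β ^ 2) * Real.cos θx)
        / (5 * (1 + β ^ 2) - (5 - β ^ 2) * Real.cos θx) * Real.cos θy)
    (α : ℂ) (hα : α ^ 2 - (r : ℂ) * (ω : ℂ) * α + ((ω : ℂ) - 1) = 0)
    (w : ℕ → ℕ → ℂ)
    (hw : ∀ i j : ℕ,
      w i j = α ^ j * (Real.sin (i * θx) : ℂ) * (Real.sin (j * θy) : ℂ)) :
    ∀ i j : ℕ, 1 ≤ i → 1 ≤ j →
      α ^ 2 * (20 * (1 + (β : ℂ) ^ 2) * w i j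
          - (10 - 2 * (β : ℂ) ^ 2) * (w (i - 1) j + w (i + 1) j))
        = (1 - (ω : ℂ)) * (20 * (1 + (β : ℂ) ^ 2) * w i j
            - (10 - 2 * (β : ℂ) ^ 2) * (w (i - 1) j + w (i + 1) j))
          + (ω : ℂ) * ((10 * (β : ℂ) ^ 2 - 2) * (α ^ 2 * w i (j - 1) + w i (j + 1))
            + (1 + (β : ℂ) ^ 2) * (α ^ 2 * (w (i - 1) (j - 1) + w (i + 1) (j - 1))
              + w (i - 1) (j + 1) + w (i + 1) (j + 1))) := by
  intro i j hi hj
  have hrD : (r : ℂ) * (5 * (1 + (β : ℂ) ^ 2) - (5 - (β : ℂ) ^ 2) * (cos θx : ℂ))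
      = (5 * (β : ℂ) ^ 2 - 1 + (1 + (β : ℂ) ^ 2) * (cos θx : ℂ)) * (cos θy : ℂ) := by
    have h : r * (5 * (1 + β ^ 2) - (5 - β ^ 2) * cos θx)
        = (5 * β ^ 2 - 1 + (1 + β ^ 2) * cos θx) * cos θy := by
      rw [hr, mul_right_comm, div_mul_cancel_of_imp hoc_numerator_eq_zero_of_denominator_eq_zero]
    exact_mod_cast h
  have hs : ((sin ((i - 1 : ℕ) * θx) : ℝ) : ℂ) + (sin ((i + 1 : ℕ) * θx) : ℝ)
      = 2 * (cos θx : ℂ) * (sin (i * θx) : ℝ) := by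
    exact_mod_cast sin_pred_mul_add_sin_succ_mul θx hi
  have ht : ((sin ((j - 1 : ℕ) * θy) : ℝ) : ℂ) + (sin ((j + 1 : ℕ) * θy) : ℝ)
      = 2 * (cos θy : ℂ) * (sin (j * θy) : ℝ) := by
    exact_mod_cast sin_pred_mul_add_sin_succ_mul θy hj
  rw [hoc_row_apply hw hs, hoc_coupling_apply hw hs ht hj]
  linear_combination (4 * (5 * (1 + (β : ℂ) ^ 2) - (5 - (β : ℂ) ^ 2) * cos θx) * w i j) * hα
    + (4 * ω * α * w i j) * hrD

/-- Separated-variables eigenfunction relation for the line SOR iteration of the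
9-point high-order compact (HOC) discretization of the Poisson equation. -/
theorem line_sor_hoc_eigenrelation
    (β ω : ℝ) (hβ : 0 < β)
    (Nx Ny : ℕ) (hNx : 0 < Nx) (hNy : 0 < Ny)
    (nx ny : ℤ)
    (θx θy r : ℝ)
    (hθx : θx = nx * Real.pi / Nx) (hθy : θy = ny * Real.pi / Ny)
    (hr : r = (5 * β ^ 2 - 1 + (1 + β ^ 2) * Real.cos θx)
        / (5 * (1 + β ^ 2) - (5 - β ^ 2) * Real.cos θx) * Real.cos θy)
    (α : ℂ) (hα : α ^ 2 - (r : ℂ) * (ω : ℂ) * α + ((ω : ℂ) - 1) = 0)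
    (w : ℕ → ℕ → ℂ)
    (hw : ∀ i j : ℕ,
      w i j = α ^ j * (Real.sin (i * θx) : ℂ) * (Real.sin (j * θy) : ℂ)) :
    ∀ i j : ℕ, 1 ≤ i → 1 ≤ j →
      α ^ 2 * (20 * (1 + (β : ℂ) ^ 2) * w i j
          - (10 - 2 * (β : ℂ) ^ 2) * (w (i - 1) j + w (i + 1) j))
        = (1 - (ω : ℂ)) * (20 * (1 + (β : ℂ) ^ 2) * w i j
            - (10 - 2 * (β : ℂ) ^ 2) * (w (i - 1) j + w (i + 1) j))
          + (ω : ℂ) * ((10 * (β : ℂ) ^ 2 - 2) * (α ^ 2 * w i (j - 1) + w i (j + 1))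
            + (1 + (β : ℂ) ^ 2) * (α ^ 2 * (w (i - 1) (j - 1) + w (i + 1) (j - 1))
              + w (i - 1) (j + 1) + w (i + 1) (j + 1))) :=
  line_sor_hoc_eigenrelation_general β ω θx θy r hr α hα w hw
end

section
/- Let β > 0 be real, set c₁ = (5 − β²)/(10(1 + β²)) and c₂ = 4/5 − 2c₁. Then for all real p ∈ [0,1] and q ∈ (0,1], the quantity Δ' = (1 + 20c₁c₂)q² + 4c₁²p²q² + 100c₁² is strictly positive. -/
/-!
Since `c₂ = 4/5 − 2c₁`, the coefficient `1 + 20c₁c₂` equals `1 + 16c₁ − 40c₁²`. Using `q² ≤ 1` to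
trade `100c₁²` for `100c₁²q²` and dropping the square `4c₁²p²q²` gives
`Δ' ≥ (1 + 16c₁ + 60c₁²)q² = (1 + 6c₁)(1 + 10c₁)q²`, and both factors are positive because
`c₁ > −1/10`.
-/

theorem neg_one_tenth_lt_div (β : ℝ) : -1 / 10 < (5 - β ^ 2) / (10 * (1 + β ^ 2)) := by
  rw [lt_div_iff₀ (by positivity)]
  linarith

theorem mul_sq_le_discriminant (c p q : ℝ) (hq : q ^ 2 ≤ 1) :
    (1 + 6 * c) * (1 + 10 * c) * q ^ 2 ≤
      (1 + 20 * c * (4 / 5 - 2 * c)) * q ^ 2 + 4 * c ^ 2 * p ^ 2 * q ^ 2 + 100 * c ^ 2 := by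
  have hgap : (1 + 20 * c * (4 / 5 - 2 * c)) * q ^ 2 + 4 * c ^ 2 * p ^ 2 * q ^ 2 + 100 * c ^ 2
      - (1 + 6 * c) * (1 + 10 * c) * q ^ 2 = 100 * c ^ 2 * (1 - q ^ 2) + 4 * (c * p * q) ^ 2 := by
    ring
  have hq' : 0 ≤ 1 - q ^ 2 := sub_nonneg.2 hq
  have : 0 ≤ 100 * c ^ 2 * (1 - q ^ 2) + 4 * (c * p * q) ^ 2 := by positivity
  linarith

theorem hoc_delta_prime_pos_general
    (β : ℝ)
    (c₁ c₂ : ℝ) (hc₁ : c₁ = (5 - β ^ 2) / (10 * (1 + β ^ 2))) (hc₂ : c₂ = 4 / 5 - 2 * c₁)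
    (p q : ℝ) (hq0 : 0 < q) (hq1 : q ≤ 1) :
    0 < (1 + 20 * c₁ * c₂) * q ^ 2 + 4 * c₁ ^ 2 * p ^ 2 * q ^ 2 + 100 * c₁ ^ 2 := by
  subst hc₂
  have hc : -1 / 10 < c₁ := hc₁ ▸ neg_one_tenth_lt_div β
  calc 0 < (1 + 6 * c₁) * (1 + 10 * c₁) * q ^ 2 :=
        mul_pos (mul_pos (by linarith) (by linarith)) (pow_pos hq0 2)
    _ ≤ _ := mul_sq_le_discriminant c₁ p q (pow_le_one₀ hq0.le hq1)

/-- With `c₁ = (5 − β²)/(10(1 + β²))` and `c₂ = 4/5 − 2c₁`, the discriminant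
`Δ' = (1 + 20c₁c₂)q² + 4c₁²p²q² + 100c₁²` is strictly positive for
`p ∈ [0,1]` and `q ∈ (0,1]`. -/
theorem hoc_delta_prime_pos
    (β : ℝ) (hβ : 0 < β)
    (c₁ c₂ : ℝ) (hc₁ : c₁ = (5 - β ^ 2) / (10 * (1 + β ^ 2))) (hc₂ : c₂ = 4 / 5 - 2 * c₁)
    (p q : ℝ) (hp0 : 0 ≤ p) (hp1 : p ≤ 1) (hq0 : 0 < q) (hq1 : q ≤ 1) :
    0 < (1 + 20 * c₁ * c₂) * q ^ 2 + 4 * c₁ ^ 2 * p ^ 2 * q ^ 2 + 100 * c₁ ^ 2 :=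
  hoc_delta_prime_pos_general β c₁ c₂ hc₁ hc₂ p q hq0 hq1
end

section
/- Let β > 0 be real, set c₁ = (5 − β²)/(10(1 + β²)) and c₂ = 4/5 − 2c₁, and let p, q ∈ [0,1]. With Δ' = (1 + 20c₁c₂)q² + 4c₁²p²q² + 100c₁², the quantity cos φ₁ = (q/5)(2c₁p² + 5c₂) − (p/5)√Δ' satisfies −1 < cos φ₁ < 1. -/
/-! With `A = 2c₁p² + 5c₂`, `cos φ₁ = (qA − p√Δ')/5`. Only `c₁ ∈ (−1/10, 1/2)` matters, and
it forces `A ∈ (−1, 5)`, hence `qA ∈ (−1, 5)` for `q ∈ [0, 1]`; this gives the upper bound at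
once. For the lower bound one needs `p√Δ' < 5 + qA`, and after squaring the decisive fact is
the identity `(5 + qA)² − p²Δ' = (5 + (4 − 10c₁)q)² − (p(q − 10c₁))²`. -/

open Set

lemma Real.mul_sqrt_lt_of_sq_mul_lt {p x y : ℝ} (hp : 0 ≤ p) (hy : 0 < y) (h : p ^ 2 * x < y ^ 2) :
    p * √x < y := by
  rwa [← Real.sqrt_sq hp, ← Real.sqrt_mul (sq_nonneg p), Real.sqrt_lt' hy]

namespace HighOrderCompactSOR

lemma c₁_mem_Ioo {β : ℝ} (hβ : β ≠ 0) :
    (5 - β ^ 2) / (10 * (1 + β ^ 2)) ∈ Ioo (-1 / 10 : ℝ) (1 / 2) := by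
  have hden : (0 : ℝ) < 10 * (1 + β ^ 2) := by positivity
  have hβ2 : 0 < β ^ 2 := by positivity
  constructor
  · rw [lt_div_iff₀ hden]; linarith
  · rw [div_lt_iff₀ hden]; linarith

variable {c p q : ℝ}

lemma coeff_mem_Ioo (hc : c ∈ Ioo (-1 / 10 : ℝ) (1 / 2)) (hp : p ∈ Icc (0 : ℝ) 1) :
    2 * c * p ^ 2 + 5 * (4 / 5 - 2 * c) ∈ Ioo (-1 : ℝ) 5 := by
  obtain ⟨hc0, hc1⟩ := hc
  have hp2 : p ^ 2 ≤ 1 := pow_le_one₀ hp.1 hp.2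
  have hp2' : 0 ≤ p ^ 2 := sq_nonneg p
  constructor <;> nlinarith

lemma abs_mul_sub_lt (hc : c ∈ Ioo (-1 / 10 : ℝ) (1 / 2)) (hp : p ∈ Icc (0 : ℝ) 1)
    (hq : q ∈ Icc (0 : ℝ) 1) : |p * (q - 10 * c)| < 5 + (4 - 10 * c) * q := by
  obtain ⟨hc0, hc1⟩ := hc
  have hlo : -(5 + (4 - 10 * c) * q) < q - 10 * c := by
    nlinarith [mul_nonneg (by linarith : (0 : ℝ) ≤ 1 - 2 * c) hq.1]
  have hhi : q - 10 * c < 5 + (4 - 10 * c) * q := by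
    nlinarith [mul_nonneg (by linarith : (0 : ℝ) ≤ 10 * c + 1) (sub_nonneg.2 hq.2)]
  rw [abs_mul, abs_of_nonneg hp.1]
  calc p * |q - 10 * c| ≤ |q - 10 * c| := mul_le_of_le_one_left (abs_nonneg _) hp.2
    _ < 5 + (4 - 10 * c) * q := abs_lt.2 ⟨hlo, hhi⟩

lemma sq_mul_discr_lt (hc : c ∈ Ioo (-1 / 10 : ℝ) (1 / 2)) (hp : p ∈ Icc (0 : ℝ) 1)
    (hq : q ∈ Icc (0 : ℝ) 1) :
    p ^ 2 * ((1 + 20 * c * (4 / 5 - 2 * c)) * q ^ 2 + 4 * c ^ 2 * p ^ 2 * q ^ 2 + 100 * c ^ 2) <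
      (5 + q * (2 * c * p ^ 2 + 5 * (4 / 5 - 2 * c))) ^ 2 := by
  have h := abs_lt.1 (abs_mul_sub_lt hc hp hq)
  linear_combination sq_lt_sq' h.1 h.2

end HighOrderCompactSOR

open HighOrderCompactSOR in
/-- With `c₁ = (5 − β²)/(10(1 + β²))`, `c₂ = 4/5 − 2c₁`, `p, q ∈ [0,1]` and
`Δ' = (1 + 20c₁c₂)q² + 4c₁²p²q² + 100c₁²`, the smaller limiting root
`cos φ₁ = (q/5)(2c₁p² + 5c₂) − (p/5)√Δ'` satisfies `−1 < cos φ₁ < 1`. -/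
theorem hoc_cos_phi1_bounds
    (β : ℝ) (hβ : 0 < β)
    (c₁ c₂ : ℝ) (hc₁ : c₁ = (5 - β ^ 2) / (10 * (1 + β ^ 2))) (hc₂ : c₂ = 4 / 5 - 2 * c₁)
    (p q : ℝ) (hp0 : 0 ≤ p) (hp1 : p ≤ 1) (hq0 : 0 ≤ q) (hq1 : q ≤ 1)
    (Δ' : ℝ) (hΔ' : Δ' = (1 + 20 * c₁ * c₂) * q ^ 2 + 4 * c₁ ^ 2 * p ^ 2 * q ^ 2 + 100 * c₁ ^ 2)
    (cosφ₁ : ℝ) (hcos : cosφ₁ = q / 5 * (2 * c₁ * p ^ 2 + 5 * c₂) - p / 5 * Real.sqrt Δ') :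
    -1 < cosφ₁ ∧ cosφ₁ < 1 := by
  subst hc₂
  have hc : c₁ ∈ Ioo (-1 / 10 : ℝ) (1 / 2) := hc₁ ▸ c₁_mem_Ioo hβ.ne'
  have hp : p ∈ Icc (0 : ℝ) 1 := ⟨hp0, hp1⟩
  have hq : q ∈ Icc (0 : ℝ) 1 := ⟨hq0, hq1⟩
  have hqA : q * (2 * c₁ * p ^ 2 + 5 * (4 / 5 - 2 * c₁)) ∈ Ioo (-1 : ℝ) 5 :=
    (convex_Ioo _ _).smul_mem_of_zero_mem (by norm_num) (coeff_mem_Ioo hc hp) hq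
  have hroot : p * √Δ' < 5 + q * (2 * c₁ * p ^ 2 + 5 * (4 / 5 - 2 * c₁)) :=
    Real.mul_sqrt_lt_of_sq_mul_lt hp0 (by linarith [hqA.1]) (hΔ' ▸ sq_mul_discr_lt hc hp hq)
  have hroot0 : 0 ≤ p * √Δ' := by positivity
  rw [hcos]
  constructor <;> linarith [hqA.2]
end

section
/- Let β > 0 be real, set c₁ = (5 − β²)/(10(1 + β²)) and c₂ = 4/5 − 2c₁, and let p, q ∈ [0,1]. With Δ' = (1 + 20c₁c₂)q² + 4c₁²p²q² + 100c₁², the quantity cos φ₂ = (q/5)(2c₁p² + 5c₂) + (p/5)√Δ' satisfies cos φ₂ ≤ 1, with equality if and only if p = 1 and q = 1. -/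
/-!
Write `cos φ₂ = (q A + p √Δ') / 5` with `A = 2c₁p² + 5c₂`; the claim is `p √Δ' ≤ 5 − q A`, with
equality only at `p = q = 1`. Both sides are nonnegative, and
`(5 − q A)² − p² Δ' = (u − v)(u + v)` with `u = 5 − 4q + 10c₁q`, `v = p(q + 10c₁)`.
For `β > 0` one has `c₁ ∈ (−1/10, 1/2)`. Each of `5 − q A`, `u − v`, `u + v` is affine in `c₁`,
hence a combination with weights `5 − 10c₁ ≥ 0` and `1 + 10c₁ > 0` of its values at the two endpoints,
and these values factor into products of visibly signed terms; for `u − v` both endpoint values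
vanish only at `p = q = 1`.
-/

lemma le_and_eq_iff_of_sq_eq_sq_sub {X Y D : ℝ} (hX : 0 ≤ X) (hY : 0 ≤ Y) (hD : 0 ≤ D)
    (h : Y ^ 2 = X ^ 2 - D) : Y ≤ X ∧ (Y = X ↔ D = 0) := by
  refine ⟨(abs_le_of_sq_le_sq' (by linarith) hX).2, ⟨fun hYX => ?_, fun hD0 => ?_⟩⟩
  · subst hYX; linarith
  · exact (sq_eq_sq₀ hY hX).1 (by rw [h, hD0, sub_zero])

lemma hoc_c₁_mem_Ioo {β : ℝ} (hβ : 0 < β) :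
    (5 - β ^ 2) / (10 * (1 + β ^ 2)) ∈ Set.Ioo (-1 / 10 : ℝ) (1 / 2) := by
  have hden : (0 : ℝ) < 10 * (1 + β ^ 2) := by positivity
  constructor
  · rw [lt_div_iff₀ hden]; nlinarith
  · rw [div_lt_iff₀ hden]; nlinarith

section
variable {c p q : ℝ}

lemma hoc_discr_nonneg (hc : -1 / 10 ≤ c) (hq : q ^ 2 ≤ 1) :
    0 ≤ (1 + 20 * c * (4 / 5 - 2 * c)) * q ^ 2 + 4 * c ^ 2 * p ^ 2 * q ^ 2 + 100 * c ^ 2 := by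
  have h : (1 + 20 * c * (4 / 5 - 2 * c)) * q ^ 2 + 4 * c ^ 2 * p ^ 2 * q ^ 2 + 100 * c ^ 2
      = q ^ 2 * ((1 + 10 * c) * (1 + 6 * c)) + (1 - q ^ 2) * (10 * c) ^ 2 + (2 * c * p * q) ^ 2 := by
    ring
  rw [h]
  have h₁ : 0 ≤ (1 + 10 * c) * (1 + 6 * c) := mul_nonneg (by linarith) (by linarith)
  have h₂ : 0 ≤ 1 - q ^ 2 := by linarith
  positivity

lemma hoc_sq_sub_mul_discr_eq (c p q : ℝ) :
    (5 - q * (2 * c * p ^ 2 + 5 * (4 / 5 - 2 * c))) ^ 2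
        - p ^ 2 * ((1 + 20 * c * (4 / 5 - 2 * c)) * q ^ 2 + 4 * c ^ 2 * p ^ 2 * q ^ 2 + 100 * c ^ 2)
      = (5 - 4 * q + 10 * c * q - p * (q + 10 * c)) * (5 - 4 * q + 10 * c * q + p * (q + 10 * c)) := by
  ring

lemma hoc_six_mul_u_sub_v (c p q : ℝ) :
    6 * (5 - 4 * q + 10 * c * q - p * (q + 10 * c))
      = (5 - 10 * c) * ((1 - q) * (5 + p)) + (1 + 10 * c) * ((1 - p) * (5 + q)) := by
  ring

lemma hoc_u_sub_v_eq_zero_iff (hc₀ : -1 / 10 < c) (hc₁ : c < 1 / 2) (hp₀ : 0 ≤ p) (hp₁ : p ≤ 1)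
    (hq₀ : 0 ≤ q) (hq₁ : q ≤ 1) :
    5 - 4 * q + 10 * c * q - p * (q + 10 * c) = 0 ↔ p = 1 ∧ q = 1 := by
  refine ⟨fun h => ?_, fun ⟨hp, hq⟩ => by subst hp hq; ring⟩
  have h₁ : 0 ≤ (1 - q) * (5 + p) := mul_nonneg (by linarith) (by linarith)
  have h₂ : 0 ≤ (1 - p) * (5 + q) := mul_nonneg (by linarith) (by linarith)
  have hq : (1 - q) * (5 + p) = 0 := by nlinarith [hoc_six_mul_u_sub_v c p q]
  have hp : (1 - p) * (5 + q) = 0 := by nlinarith [hoc_six_mul_u_sub_v c p q]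
  rw [mul_eq_zero_iff_right (by linarith), sub_eq_zero] at hq hp
  exact ⟨hp.symm, hq.symm⟩

lemma hoc_u_add_v_pos (hc₀ : -1 / 10 < c) (hc₁ : c ≤ 1 / 2) (hp₀ : 0 ≤ p) (hp₁ : p ≤ 1)
    (hq₀ : 0 ≤ q) (hq₁ : q ≤ 1) : 0 < 5 - 4 * q + 10 * c * q + p * (q + 10 * c) := by
  have h : 6 * (5 - 4 * q + 10 * c * q + p * (q + 10 * c))
      = (5 - 10 * c) * ((1 - q) * (5 - p)) + (1 + 10 * c) * ((1 + p) * (5 + q)) := by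
    ring
  have h₁ : 0 ≤ (5 - 10 * c) * ((1 - q) * (5 - p)) :=
    mul_nonneg (by linarith) (mul_nonneg (by linarith) (by linarith))
  have h₂ : 0 < (1 + 10 * c) * ((1 + p) * (5 + q)) :=
    mul_pos (by linarith) (mul_pos (by linarith) (by linarith))
  linarith

variable (hc₀ : -1 / 10 ≤ c) (hc₁ : c ≤ 1 / 2)
  (hp₀ : 0 ≤ p) (hp₁ : p ≤ 1) (hq₀ : 0 ≤ q) (hq₁ : q ≤ 1)
include hc₀ hc₁ hp₀ hp₁ hq₀ hq₁

lemma hoc_five_sub_q_mul_nonneg : 0 ≤ 5 - q * (2 * c * p ^ 2 + 5 * (4 / 5 - 2 * c)) := by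
  have h : 6 * (5 - q * (2 * c * p ^ 2 + 5 * (4 / 5 - 2 * c)))
      = (5 - 10 * c) * (5 * (1 - q) + q * p ^ 2 / 5) + (1 + 10 * c) * (5 + q * (1 - p ^ 2)) := by
    ring
  have h₁ : 0 ≤ 1 - p ^ 2 := by nlinarith
  have h₂ : 0 ≤ (5 - 10 * c) * (5 * (1 - q) + q * p ^ 2 / 5) :=
    mul_nonneg (by linarith) (by positivity)
  have h₃ : 0 ≤ (1 + 10 * c) * (5 + q * (1 - p ^ 2)) :=
    mul_nonneg (by linarith) (by positivity)
  linarith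

lemma hoc_u_sub_v_nonneg : 0 ≤ 5 - 4 * q + 10 * c * q - p * (q + 10 * c) := by
  have h₁ : 0 ≤ (5 - 10 * c) * ((1 - q) * (5 + p)) :=
    mul_nonneg (by linarith) (mul_nonneg (by linarith) (by linarith))
  have h₂ : 0 ≤ (1 + 10 * c) * ((1 - p) * (5 + q)) :=
    mul_nonneg (by linarith) (mul_nonneg (by linarith) (by linarith))
  linarith [hoc_six_mul_u_sub_v c p q]

end

/-- With `c₁ = (5 − β²)/(10(1 + β²))`, `c₂ = 4/5 − 2c₁`, `p, q ∈ [0,1]` and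
`Δ' = (1 + 20c₁c₂)q² + 4c₁²p²q² + 100c₁²`, the larger limiting root
`cos φ₂ = (q/5)(2c₁p² + 5c₂) + (p/5)√Δ'` satisfies `cos φ₂ ≤ 1`, with equality
iff `p = 1` and `q = 1`. -/
theorem hoc_cos_phi2_le_one
    (β : ℝ) (hβ : 0 < β)
    (c₁ c₂ : ℝ) (hc₁ : c₁ = (5 - β ^ 2) / (10 * (1 + β ^ 2))) (hc₂ : c₂ = 4 / 5 - 2 * c₁)
    (p q : ℝ) (hp0 : 0 ≤ p) (hp1 : p ≤ 1) (hq0 : 0 ≤ q) (hq1 : q ≤ 1)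
    (Δ' : ℝ) (hΔ' : Δ' = (1 + 20 * c₁ * c₂) * q ^ 2 + 4 * c₁ ^ 2 * p ^ 2 * q ^ 2 + 100 * c₁ ^ 2)
    (cosφ₂ : ℝ) (hcos : cosφ₂ = q / 5 * (2 * c₁ * p ^ 2 + 5 * c₂) + p / 5 * Real.sqrt Δ') :
    cosφ₂ ≤ 1 ∧ (cosφ₂ = 1 ↔ p = 1 ∧ q = 1) := by
  subst hc₂ hΔ' hcos
  obtain ⟨hc₀, hc₁'⟩ : c₁ ∈ Set.Ioo (-1 / 10 : ℝ) (1 / 2) := hc₁ ▸ hoc_c₁_mem_Ioo hβ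
  have hΔ := hoc_discr_nonneg (p := p) (q := q) hc₀.le (by nlinarith)
  have hadd := hoc_u_add_v_pos hc₀ hc₁'.le hp0 hp1 hq0 hq1
  obtain ⟨hle, heq⟩ := le_and_eq_iff_of_sq_eq_sq_sub
    (hoc_five_sub_q_mul_nonneg hc₀.le hc₁'.le hp0 hp1 hq0 hq1)
    (mul_nonneg hp0 (Real.sqrt_nonneg _))
    (mul_nonneg (hoc_u_sub_v_nonneg hc₀.le hc₁'.le hp0 hp1 hq0 hq1) hadd.le)
    (by rw [mul_pow, Real.sq_sqrt hΔ]; linarith [hoc_sq_sub_mul_discr_eq c₁ p q])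
  rw [mul_eq_zero_iff_right hadd.ne', hoc_u_sub_v_eq_zero_iff hc₀ hc₁' hp0 hp1 hq0 hq1] at heq
  constructor
  · linarith
  · exact ⟨fun h => heq.1 (by linarith), fun h => by linarith [heq.2 h]⟩
end

section
/- Let c₁ ≥ 0 and δ > 0 be real numbers, and set k₁ = δ(1 + 10c₁)/√((1 + 14c₁)(1 + 6c₁)). Then k₁ ≥ δ, and k₁ satisfies the balance equation (1/2 − c₁/(1 + 8c₁)) · k₁ = ((1 + 10c₁)/(2(1 + 8c₁))) · (k₁ − √(k₁² − δ²)). -/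
/-!
Write `k₁ = δ m / √((m + d)(m - d))` with `m = 1 + 10c₁`, `d = 4c₁`; indeed
`(1 + 14c₁)(1 + 6c₁) = m² - d²`. Then `k₁² - δ² = (δ d / √(m² - d²))²`, so
`k₁ - √(k₁² - δ²) = δ (m - d) / √(m² - d²)`, and with `m - d = 1 + 6c₁` both sides of the
balance equation become `δ (1 + 6c₁)(1 + 10c₁) / (2 (1 + 8c₁) √(m² - d²))`.
-/

namespace HOC

variable {δ m d : ℝ}

lemma sqrt_mul_add_sub_le (hm : 0 ≤ m) : √((m + d) * (m - d)) ≤ m :=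
  Real.sqrt_le_iff.mpr ⟨hm, by nlinarith [sq_nonneg d]⟩

lemma le_mul_div_sqrt (hδ : 0 ≤ δ) (hd : 0 ≤ d) (hdm : d < m) :
    δ ≤ δ * m / √((m + d) * (m - d)) := by
  have hpos : 0 < √((m + d) * (m - d)) := Real.sqrt_pos.mpr (by nlinarith)
  rw [le_div_iff₀ hpos]
  exact mul_le_mul_of_nonneg_left (sqrt_mul_add_sub_le (by linarith)) hδ

lemma sqrt_sq_sub_sq_mul_div_sqrt (hδ : 0 ≤ δ) (hd : 0 ≤ d) (hdm : d < m) :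
    √((δ * m / √((m + d) * (m - d))) ^ 2 - δ ^ 2) = δ * d / √((m + d) * (m - d)) := by
  have hP : 0 < (m + d) * (m - d) := by nlinarith
  have hsq : (δ * m / √((m + d) * (m - d))) ^ 2 - δ ^ 2 = (δ * d / √((m + d) * (m - d))) ^ 2 := by
    rw [div_pow, div_pow, Real.sq_sqrt hP.le, sub_eq_iff_eq_add, div_add' _ _ _ hP.ne']
    ring
  rw [hsq, Real.sqrt_sq (by positivity)]

end HOC

open HOC in
/-- For `c₁ ≥ 0` and `δ > 0`, the optimal first-order coefficient
`k₁ = δ(1 + 10c₁)/√((1 + 14c₁)(1 + 6c₁))` satisfies `k₁ ≥ δ` and the balance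
equation `(1/2 − c₁/(1 + 8c₁))k₁ = ((1 + 10c₁)/(2(1 + 8c₁)))(k₁ − √(k₁² − δ²))`. -/
theorem hoc_optimal_k1
    (c₁ δ : ℝ) (hc₁ : 0 ≤ c₁) (hδ : 0 < δ)
    (k₁ : ℝ) (hk₁ : k₁ = δ * (1 + 10 * c₁) / Real.sqrt ((1 + 14 * c₁) * (1 + 6 * c₁))) :
    δ ≤ k₁ ∧
    (1 / 2 - c₁ / (1 + 8 * c₁)) * k₁
      = (1 + 10 * c₁) / (2 * (1 + 8 * c₁)) * (k₁ - Real.sqrt (k₁ ^ 2 - δ ^ 2)) := by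
  have hd : 0 ≤ 4 * c₁ := by positivity
  have hdm : 4 * c₁ < 1 + 10 * c₁ := by linarith
  have hfactor : (1 + 14 * c₁) * (1 + 6 * c₁)
      = (1 + 10 * c₁ + 4 * c₁) * (1 + 10 * c₁ - 4 * c₁) := by ring
  rw [hfactor] at hk₁
  subst hk₁
  refine ⟨le_mul_div_sqrt hδ.le hd hdm, ?_⟩
  rw [sqrt_sq_sub_sq_mul_div_sqrt hδ.le hd hdm]
  have hpos : 0 < √((1 + 10 * c₁ + 4 * c₁) * (1 + 10 * c₁ - 4 * c₁)) :=
    Real.sqrt_pos.mpr (by nlinarith)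
  have h8 : 1 + 8 * c₁ ≠ 0 := by positivity
  field_simp
  ring
end

section
/- Let Δx, m, n be real numbers with Δx > 0, n ≤ 0 and m + 1 > 0. Define sh(k) = sinh(kΔx)/Δx and f(k) = (m − n·sh(k)²)·tanh(k) + sh(k). Then f(k) > 0 for every k > 0; in particular f has no positive root. -/
/-!
For `k > 0` we have `0 < tanh k < k < sh k`: the first inequality because `tanh = sinh / cosh`,
the second because `k ↦ k cosh k - sinh k` has derivative `k sinh k > 0`, the third because
`sinh x > x`. Since `n ≤ 0`, the term `-n sh(k)² tanh k` is nonnegative, so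
`f k ≥ m tanh k + sh k > (m + 1) tanh k > 0`.
-/

namespace Real

theorem sinh_lt_mul_cosh {x : ℝ} (hx : 0 < x) : sinh x < x * cosh x := by
  have hderiv : ∀ t : ℝ, HasDerivAt (fun t ↦ t * cosh t - sinh t) (t * sinh t) t := fun t ↦
    (((hasDerivAt_id t).mul (hasDerivAt_cosh t)).sub (hasDerivAt_sinh t)).congr_deriv
      (by simp)
  have hmono : StrictMonoOn (fun t ↦ t * cosh t - sinh t) (Set.Ici 0) := by
    refine strictMonoOn_of_deriv_pos (convex_Ici 0) (by fun_prop) fun t ht ↦ ?_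
    rw [interior_Ici] at ht
    rw [(hderiv t).deriv]
    exact mul_pos ht (sinh_pos_iff.2 ht)
  simpa using hmono Set.self_mem_Ici (Set.mem_Ici.2 hx.le) hx

theorem tanh_pos {x : ℝ} (hx : 0 < x) : 0 < tanh x := by
  rw [tanh_eq_sinh_div_cosh]
  exact div_pos (sinh_pos_iff.2 hx) (cosh_pos x)

theorem tanh_lt_self {x : ℝ} (hx : 0 < x) : tanh x < x := by
  rw [tanh_eq_sinh_div_cosh, div_lt_iff₀ (cosh_pos x)]
  exact sinh_lt_mul_cosh hx

theorem self_lt_sinh_mul_div {x h : ℝ} (hx : 0 < x) (hh : 0 < h) : x < sinh (x * h) / h := by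
  rw [lt_div_iff₀ hh]
  exact self_lt_sinh_iff.2 (mul_pos hx hh)

end Real

/-- Robin boundary conditions, Case I (`n ≤ 0`, `m + 1 > 0`): the hyperbolic
characteristic function `f(k) = (m − n·sh(k)²)·tanh(k) + sh(k)`, with
`sh(k) = sinh(kΔx)/Δx`, is positive for all `k > 0`; in particular it has no
positive root. -/
theorem robin_case_I_no_positive_root
    (Δx m n : ℝ) (hΔx : 0 < Δx) (hn : n ≤ 0) (hm : 0 < m + 1)
    (sh : ℝ → ℝ) (hsh : ∀ k, sh k = Real.sinh (k * Δx) / Δx)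
    (f : ℝ → ℝ) (hf : ∀ k, f k = (m - n * sh k ^ 2) * Real.tanh k + sh k) :
    ∀ k : ℝ, 0 < k → 0 < f k := by
  intro k hk
  have htanh_lt_sh : Real.tanh k < sh k := by
    rw [hsh]
    exact (Real.tanh_lt_self hk).trans (Real.self_lt_sinh_mul_div hk hΔx)
  have htanh_pos := Real.tanh_pos hk
  have hquad : 0 ≤ -n * sh k ^ 2 * Real.tanh k :=
    mul_nonneg (mul_nonneg (neg_nonneg.2 hn) (sq_nonneg _)) htanh_pos.le
  rw [hf]
  nlinarith [mul_pos hm htanh_pos]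
end

section
/- Let Δx, m, n be real numbers with 0 < Δx ≤ 1, n ≤ 0 and m + 1 < 0. Define sh(k) = sinh(kΔx)/Δx and f(k) = (m − n·sh(k)²)·tanh(k) + sh(k). Then there exists exactly one k > 0 with f(k) = 0. -/
/-!
For `k > 0`, `f k / tanh k = m - n sh(k)² + sh(k) coth k`. The first part is nondecreasing since
`n ≤ 0`, and `sh · coth` is strictly increasing because `sinh x ≤ x cosh x` and
`x < sinh x cosh x`; so `f` has at most one positive root. It has one because `f 0 = 0` and
`f' 0 = m + 1 < 0` make `f` negative just right of `0`, while `f k ≥ m + k` for `k > 0`.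
-/

open Real Set Filter Topology

theorem Real.sinh_le_mul_cosh {x : ℝ} (hx : 0 ≤ x) : sinh x ≤ x * cosh x := by
  have hmono : MonotoneOn (fun x => x * cosh x - sinh x) (Ici 0) := by
    refine monotoneOn_of_hasDerivWithinAt_nonneg (f' := fun x => x * sinh x) (convex_Ici 0)
      (by fun_prop) (fun x _ => ?_) fun x hx => ?_
    · refine (((hasDerivAt_id x).mul (hasDerivAt_cosh x)).sub
        (hasDerivAt_sinh x)).hasDerivWithinAt.congr_deriv ?_
      simp only [id]; ring
    · rw [interior_Ici, mem_Ioi] at hx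
      exact mul_nonneg hx.le (sinh_nonneg_iff.2 hx.le)
  simpa using hmono self_mem_Ici hx hx

theorem Real.lt_sinh_mul_cosh {x : ℝ} (hx : 0 < x) : x < sinh x * cosh x := by
  have := self_lt_sinh_iff.2 (mul_pos two_pos hx)
  rw [sinh_two_mul] at this
  linarith

theorem exists_gt_lt_of_hasDerivAt_neg {f : ℝ → ℝ} {x₀ f' : ℝ} (hf : HasDerivAt f f' x₀)
    (hf' : f' < 0) : ∃ x > x₀, f x < f x₀ := by
  have hslope : ∀ᶠ x in 𝓝[>] x₀, slope f x₀ x < 0 :=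
    (hasDerivAt_iff_tendsto_slope.1 hf |>.eventually (eventually_lt_nhds hf')).filter_mono
      (nhdsGT_le_nhdsNE x₀)
  obtain ⟨x, hx, hx₀⟩ := (hslope.and self_mem_nhdsWithin).exists
  refine ⟨x, hx₀, ?_⟩
  rw [slope_def_field, div_neg_iff] at hx
  rcases hx with ⟨_, h⟩ | ⟨h, _⟩
  · linarith [show x₀ < x from hx₀]
  · linarith

theorem Real.hasDerivAt_tanh (x : ℝ) : HasDerivAt tanh (1 / cosh x ^ 2) x := by
  have h := (hasDerivAt_sinh x).div (hasDerivAt_cosh x) (cosh_pos x).ne'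
  rw [show sinh / cosh = tanh from funext fun x => (tanh_eq_sinh_div_cosh x).symm] at h
  refine h.congr_deriv ?_
  rw [← sq, ← sq, cosh_sq_sub_sinh_sq]

/-- The paper's `sh` for grid spacing `a`. -/
noncomputable def discreteSinh (a k : ℝ) : ℝ := sinh (k * a) / a

noncomputable def robinChar (a m n k : ℝ) : ℝ :=
  (m - n * discreteSinh a k ^ 2) * tanh k + discreteSinh a k

section

variable {a m n k : ℝ}

theorem hasDerivAt_discreteSinh (ha : a ≠ 0) (k : ℝ) :
    HasDerivAt (discreteSinh a) (cosh (k * a)) k := by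
  have := (((hasDerivAt_id k).mul_const a).sinh).div_const a
  rwa [id, one_mul, mul_div_cancel_right₀ _ ha] at this

@[simp] theorem discreteSinh_zero_right (a : ℝ) : discreteSinh a 0 = 0 := by
  simp [discreteSinh]

theorem continuous_discreteSinh (a : ℝ) : Continuous (discreteSinh a) := by
  unfold discreteSinh; fun_prop

theorem discreteSinh_nonneg (ha : 0 < a) (hk : 0 ≤ k) : 0 ≤ discreteSinh a k :=
  div_nonneg (sinh_nonneg_iff.2 (mul_nonneg hk ha.le)) ha.le

theorem self_le_discreteSinh (ha : 0 < a) (hk : 0 ≤ k) : k ≤ discreteSinh a k := by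
  rw [discreteSinh, le_div_iff₀ ha]
  exact self_le_sinh_iff.2 (mul_nonneg hk ha.le)

theorem monotoneOn_discreteSinh_sq (ha : 0 < a) :
    MonotoneOn (fun k => discreteSinh a k ^ 2) (Ici 0) := by
  intro k hk l hl hkl
  refine pow_le_pow_left₀ (discreteSinh_nonneg ha hk) ?_ 2
  exact div_le_div_of_nonneg_right (sinh_le_sinh.2 (mul_le_mul_of_nonneg_right hkl ha.le)) ha.le

theorem discreteSinh_lt_cosh_mul_sinh_mul_cosh (ha : 0 < a) (hk : 0 < k) :
    discreteSinh a k < cosh (k * a) * (sinh k * cosh k) := by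
  rw [discreteSinh, div_lt_iff₀ ha]
  calc sinh (k * a) ≤ k * a * cosh (k * a) := sinh_le_mul_cosh (by positivity)
    _ < sinh k * cosh k * a * cosh (k * a) := by gcongr; exact lt_sinh_mul_cosh hk
    _ = _ := by ring

theorem strictMonoOn_discreteSinh_mul_coth (ha : 0 < a) :
    StrictMonoOn (fun k => discreteSinh a k * cosh k / sinh k) (Ioi 0) := by
  refine strictMonoOn_of_hasDerivWithinAt_pos (convex_Ioi 0)
    (f' := fun k => (cosh (k * a) * (sinh k * cosh k) - discreteSinh a k) / sinh k ^ 2)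
    ?_ (fun k hk => ?_) fun k hk => ?_
  · exact fun k hk => (((continuous_discreteSinh a).mul continuous_cosh).continuousAt.div
      continuous_sinh.continuousAt (sinh_pos_iff.2 hk).ne').continuousWithinAt
  · rw [interior_Ioi] at hk ⊢
    have hs : sinh k ≠ 0 := (sinh_pos_iff.2 hk).ne'
    refine (((hasDerivAt_discreteSinh ha.ne' k).mul (hasDerivAt_cosh k)).div
      (hasDerivAt_sinh k) hs).hasDerivWithinAt.congr_deriv ?_
    rw [Pi.mul_apply]
    congr 1
    linear_combination -discreteSinh a k * cosh_sq_sub_sinh_sq k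
  · rw [interior_Ioi] at hk
    exact div_pos (sub_pos.2 (discreteSinh_lt_cosh_mul_sinh_mul_cosh ha hk))
      (pow_pos (sinh_pos_iff.2 hk) 2)


theorem continuous_robinChar (a m n : ℝ) : Continuous (robinChar a m n) := by
  have hsh := continuous_discreteSinh a
  have htanh : Continuous tanh :=
    continuous_iff_continuousAt.2 fun k => (hasDerivAt_tanh k).continuousAt
  unfold robinChar
  fun_prop

theorem hasDerivAt_robinChar_zero (ha : a ≠ 0) (m n : ℝ) :
    HasDerivAt (robinChar a m n) (m + 1) 0 := by
  have htanh : HasDerivAt tanh 1 0 := by simpa using hasDerivAt_tanh 0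
  have hsh := hasDerivAt_discreteSinh ha 0
  refine (((hsh.pow 2).const_mul n |>.const_sub m).mul htanh |>.add hsh).congr_deriv ?_
  simp

theorem exists_pos_robinChar_neg (ha : a ≠ 0) (hm : m + 1 < 0) :
    ∃ k > 0, robinChar a m n k < 0 := by
  simpa [robinChar] using exists_gt_lt_of_hasDerivAt_neg (hasDerivAt_robinChar_zero ha m n) hm

theorem robinChar_pos (ha : 0 < a) (hn : n ≤ 0) (hm : m ≤ 0) (hk : -m < k) :
    0 < robinChar a m n k := by
  have hk₀ : 0 ≤ k := by linarith
  have htanh₀ : 0 ≤ tanh k := by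
    rw [tanh_eq_sinh_div_cosh]; exact div_nonneg (sinh_nonneg_iff.2 hk₀) (cosh_pos k).le
  have hsq : 0 ≤ -n * discreteSinh a k ^ 2 * tanh k :=
    mul_nonneg (mul_nonneg (neg_nonneg.2 hn) (sq_nonneg _)) htanh₀
  have hm_tanh : m ≤ m * tanh k := by nlinarith [tanh_lt_one k]
  have hsh := self_le_discreteSinh ha hk₀
  unfold robinChar
  nlinarith

theorem exists_pos_robinChar_eq_zero (ha : 0 < a) (hn : n ≤ 0) (hm : m + 1 < 0) :
    ∃ k > 0, robinChar a m n k = 0 := by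
  obtain ⟨k₀, hk₀, hf₀⟩ := exists_pos_robinChar_neg (n := n) ha.ne' hm
  set k₁ := max k₀ (1 - m)
  have hf₁ : 0 < robinChar a m n k₁ :=
    robinChar_pos ha hn (by linarith) (lt_max_of_lt_right (by linarith))
  obtain ⟨k, hk, hfk⟩ := intermediate_value_Icc (le_max_left k₀ (1 - m))
    (continuous_robinChar a m n).continuousOn ⟨hf₀.le, hf₁.le⟩
  exact ⟨k, hk₀.trans_le hk.1, hfk⟩

theorem robinChar_div_tanh (hk : sinh k ≠ 0) :
    robinChar a m n k / tanh k =
      m - n * discreteSinh a k ^ 2 + discreteSinh a k * cosh k / sinh k := by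
  rw [robinChar, tanh_eq_sinh_div_cosh]
  field_simp [(cosh_pos k).ne']

theorem strictMonoOn_robinChar_div_tanh (ha : 0 < a) (hn : n ≤ 0) :
    StrictMonoOn (fun k => robinChar a m n k / tanh k) (Ioi 0) := by
  refine StrictMonoOn.congr ?_ fun k hk => (robinChar_div_tanh (sinh_pos_iff.2 hk).ne').symm
  refine MonotoneOn.add_strictMono (fun k hk l hl hkl => ?_)
    (strictMonoOn_discreteSinh_mul_coth ha)
  have hsq := monotoneOn_discreteSinh_sq ha (mem_Ici_of_Ioi hk) (mem_Ici_of_Ioi hl) hkl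
  nlinarith

end

theorem robin_case_II_unique_positive_root_general
    (Δx m n : ℝ) (hΔx0 : 0 < Δx) (hn : n ≤ 0) (hm : m + 1 < 0)
    (sh : ℝ → ℝ) (hsh : ∀ k, sh k = Real.sinh (k * Δx) / Δx)
    (f : ℝ → ℝ) (hf : ∀ k, f k = (m - n * sh k ^ 2) * Real.tanh k + sh k) :
    ∃! k : ℝ, 0 < k ∧ f k = 0 := by
  obtain rfl : sh = discreteSinh Δx := funext hsh
  obtain rfl : f = robinChar Δx m n := funext hf
  obtain ⟨k, hk, hfk⟩ := exists_pos_robinChar_eq_zero hΔx0 hn hm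
  refine ⟨k, ⟨hk, hfk⟩, fun l ⟨hl, hfl⟩ => ?_⟩
  refine (strictMonoOn_robinChar_div_tanh (m := m) hΔx0 hn).injOn hl hk ?_
  simp only [hfk, hfl, zero_div]

/-- Robin boundary conditions, Case II (`n ≤ 0`, `m + 1 < 0`, `0 < Δx ≤ 1`): the
hyperbolic characteristic function `f(k) = (m − n·sh(k)²)·tanh(k) + sh(k)`, with
`sh(k) = sinh(kΔx)/Δx`, has exactly one positive root. -/
theorem robin_case_II_unique_positive_root
    (Δx m n : ℝ) (hΔx0 : 0 < Δx) (hΔx1 : Δx ≤ 1) (hn : n ≤ 0) (hm : m + 1 < 0)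
    (sh : ℝ → ℝ) (hsh : ∀ k, sh k = Real.sinh (k * Δx) / Δx)
    (f : ℝ → ℝ) (hf : ∀ k, f k = (m - n * sh k ^ 2) * Real.tanh k + sh k) :
    ∃! k : ℝ, 0 < k ∧ f k = 0 :=
  robin_case_II_unique_positive_root_general Δx m n hΔx0 hn hm sh hsh f hf
end

section
/- Let Δx, m, n be real numbers with 0 < Δx ≤ 1, n > 0 and m + 1 > 0. Define sh(k) = sinh(kΔx)/Δx and f(k) = (m − n·sh(k)²)·tanh(k) + sh(k). Then there exists exactly one k > 0 with f(k) = 0. -/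
/-!
For `k > 0`, dividing `f k = 0` by `tanh k * sh k ^ 2` turns it into `n = ψ k` with
`ψ k = (m + 1) / sh k ^ 2 + (coth k / sh k - 1 / sh k ^ 2)`. The first term is strictly
decreasing because `m + 1 > 0`. The second is nonnegative, and for `Δx ≤ 1` nonincreasing:
with `x = k Δx ≤ k`, its derivative has the sign of
`2 cosh x sinh² k - sh² - sh cosh x sinh k cosh k`, and after dividing by `sinh² k` this
expression is nonincreasing in `k` on `[x, ∞)`, where it starts at `-(cosh x - 1)²`.
Hence `ψ` is continuous and strictly decreasing on `(0, ∞)`, exceeds any level near `0` and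
is `O(1/k)` at infinity, so it takes the value `n` exactly once.
-/

open Real Set

lemma monotoneOn_Ici_of_hasDerivAt_nonneg {f f' : ℝ → ℝ} {a : ℝ}
    (hf : ∀ x, a ≤ x → HasDerivAt f (f' x) x) (hf' : ∀ x, a < x → 0 ≤ f' x) :
    MonotoneOn f (Ici a) := by
  refine monotoneOn_of_hasDerivWithinAt_nonneg (f' := f') (convex_Ici a)
    (fun x hx => (hf x hx).continuousAt.continuousWithinAt) (fun x hx => ?_) (fun x hx => ?_)
  all_goals rw [interior_Ici] at hx
  · exact (hf x hx.le).hasDerivWithinAt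
  · exact hf' x hx

namespace Real

lemma sinh_le_mul_cosh_s16 {x : ℝ} (hx : 0 ≤ x) : sinh x ≤ x * cosh x := by
  have hmono : MonotoneOn (fun t => t * cosh t - sinh t) (Ici 0) :=
    monotoneOn_Ici_of_hasDerivAt_nonneg (f' := fun t => t * sinh t)
      (fun t _ =>
        (((hasDerivAt_id' t).mul (hasDerivAt_cosh t)).sub (hasDerivAt_sinh t)).congr_deriv
          (by ring))
      (fun t ht => mul_nonneg ht.le (sinh_nonneg_iff.2 ht.le))
  simpa using hmono self_mem_Ici hx hx

lemma add_pow_three_div_six_le_sinh {x : ℝ} (hx : 0 ≤ x) : x + x ^ 3 / 6 ≤ sinh x := by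
  have := sum_le_hasSum (Finset.range 2) (fun n _ => by positivity) (hasSum_sinh x)
  norm_num [Finset.sum_range_succ, Nat.factorial] at this
  exact this

lemma sub_pow_three_div_three_mul_cosh_le_sinh {x : ℝ} (hx : 0 ≤ x) :
    (x - x ^ 3 / 3) * cosh x ≤ sinh x := by
  have hmono : MonotoneOn (fun t => sinh t - (t - t ^ 3 / 3) * cosh t) (Ici 0) :=
    monotoneOn_Ici_of_hasDerivAt_nonneg
      (f' := fun t => t ^ 2 * cosh t - (t - t ^ 3 / 3) * sinh t)
      (fun t _ => ((hasDerivAt_sinh t).sub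
          (((hasDerivAt_id' t).sub ((hasDerivAt_pow 3 t).div_const 3)).mul
            (hasDerivAt_cosh t))).congr_deriv (by simp only [Pi.sub_apply]; ring))
      (fun t ht => by
        nlinarith [sinh_le_mul_cosh_s16 ht.le, sinh_nonneg_iff.2 ht.le, pow_pos ht 3])
  simpa using hmono self_mem_Ici hx hx

lemma two_mul_sq_mul_cosh_le {x : ℝ} (hx : 0 ≤ x) :
    2 * x ^ 2 * cosh x ≤ sinh x ^ 2 * cosh x + x * sinh x := by
  have hsinh_sq : x ^ 2 + x ^ 4 / 3 ≤ sinh x ^ 2 := by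
    nlinarith [add_pow_three_div_six_le_sinh hx, pow_nonneg hx 3, pow_nonneg hx 6]
  have htanh : x * ((x - x ^ 3 / 3) * cosh x) ≤ x * sinh x :=
    mul_le_mul_of_nonneg_left (sub_pow_three_div_three_mul_cosh_le_sinh hx) hx
  nlinarith [mul_le_mul_of_nonneg_right hsinh_sq (cosh_pos x).le]

lemma cosh_le_two_mul_sinh {x : ℝ} (hx : 1 ≤ x) : cosh x ≤ 2 * sinh x := by
  have hexp : 2 ≤ exp x := by linarith [add_one_le_exp x]
  have hinv : (exp x)⁻¹ ≤ 2⁻¹ := inv_anti₀ two_pos hexp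
  rw [cosh_eq, sinh_eq, exp_neg]
  linarith

lemma monotoneOn_Ici_sq_mul_div_sinh_add {b c x : ℝ} (hb : 0 < b) (hbc : b ≤ c) (hx : 0 < x) :
    MonotoneOn (fun k => b ^ 2 * (k / sinh k) ^ 2 + b * c * (k * cosh k / sinh k)) (Ici x) := by
  refine monotoneOn_Ici_of_hasDerivAt_nonneg
    (f' := fun k => (2 * b ^ 2 * k * (sinh k - k * cosh k) + b * c * sinh k * (cosh k * sinh k - k))
      / sinh k ^ 3) (fun k hk => ?_) (fun k hk => ?_)
  · have hS : sinh k ≠ 0 := (sinh_pos_iff.2 (hx.trans_le hk)).ne'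
    have hdiv := (hasDerivAt_id' k).div (hasDerivAt_sinh k) hS
    have hcoth := ((hasDerivAt_id' k).mul (hasDerivAt_cosh k)).div (hasDerivAt_sinh k) hS
    refine (((hdiv.pow 2).const_mul (b ^ 2)).add (hcoth.const_mul (b * c))).congr_deriv ?_
    simp only [Pi.div_apply, Pi.mul_apply]
    norm_num
    field_simp
    linear_combination (-(c * sinh k * k)) * cosh_sq k
  · -- as `sinh k ≤ k cosh k` and `b ≤ c`, the numerator is at least
    -- `b c (k sinh k - 2 k² cosh k + sinh² k cosh k)`
    have hk0 : 0 < k := hx.trans hk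
    have hS := sinh_pos_iff.2 hk0
    have hSC : sinh k - k * cosh k ≤ 0 := by linarith [sinh_le_mul_cosh_s16 hk0.le]
    have hbck : 0 ≤ b * k * (c - b) := mul_nonneg (mul_nonneg hb.le hk0.le) (sub_nonneg.2 hbc)
    have hA := two_mul_sq_mul_cosh_le hk0.le
    refine div_nonneg ?_ (by positivity)
    nlinarith [mul_le_mul_of_nonneg_left hA (mul_pos hb (hb.trans_le hbc)).le,
      mul_nonpos_of_nonneg_of_nonpos hbck hSC]

lemma two_mul_cosh_mul_sinh_sq_le {x k : ℝ} (hx : 0 < x) (hxk : x ≤ k) :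
    2 * cosh x * sinh k ^ 2 ≤
      (k * sinh x / x) ^ 2 + k * sinh x / x * cosh x * sinh k * cosh k := by
  have hSx := sinh_pos_iff.2 hx
  have hSk := sinh_pos_iff.2 (hx.trans_le hxk)
  have hbc : sinh x / x ≤ cosh x := by
    rw [div_le_iff₀ hx, mul_comm]; exact sinh_le_mul_cosh_s16 hx.le
  have hmono := monotoneOn_Ici_sq_mul_div_sinh_add (div_pos hSx hx) hbc hx self_mem_Ici hxk hxk
  have hbase : (sinh x / x) ^ 2 * (x / sinh x) ^ 2 + sinh x / x * cosh x * (x * cosh x / sinh x)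
      = 1 + cosh x ^ 2 := by
    field_simp
  have hscale : sinh k ^ 2 * ((sinh x / x) ^ 2 * (k / sinh k) ^ 2
      + sinh x / x * cosh x * (k * cosh k / sinh k))
      = (k * sinh x / x) ^ 2 + k * sinh x / x * cosh x * sinh k * cosh k := by
    field_simp
  simp only [hbase] at hmono
  rw [← hscale]
  nlinarith [mul_le_mul_of_nonneg_left hmono (sq_nonneg (sinh k)), sq_nonneg (cosh x - 1)]

end Real

noncomputable def gridSinh (a k : ℝ) : ℝ := sinh (k * a) / a

noncomputable def cothGap (a k : ℝ) : ℝ :=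
  cosh k / (sinh k * gridSinh a k) - 1 / gridSinh a k ^ 2

noncomputable def psi (a m k : ℝ) : ℝ := (m + 1) / gridSinh a k ^ 2 + cothGap a k

section

variable {a m n k : ℝ}

lemma hasDerivAt_gridSinh (ha : a ≠ 0) (x : ℝ) : HasDerivAt (gridSinh a) (cosh (x * a)) x := by
  have := ((hasDerivAt_sinh (x * a)).comp x (hasDerivAt_mul_const a)).div_const a
  exact this.congr_deriv (by field_simp)

lemma gridSinh_pos (ha : 0 < a) (hk : 0 < k) : 0 < gridSinh a k :=
  div_pos (sinh_pos_iff.2 (mul_pos hk ha)) ha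

lemma le_gridSinh (ha : 0 < a) (hk : 0 ≤ k) : k ≤ gridSinh a k := by
  rw [gridSinh, le_div_iff₀ ha]
  exact self_le_sinh_iff.2 (mul_nonneg hk ha.le)

lemma strictMono_gridSinh (ha : 0 < a) : StrictMono (gridSinh a) := fun _ _ hxy =>
  div_lt_div_of_pos_right (sinh_strictMono (mul_lt_mul_of_pos_right hxy ha)) ha

lemma gridSinh_arsinh_mul_div (ha : a ≠ 0) (y : ℝ) : gridSinh a (arsinh (a * y) / a) = y := by
  rw [gridSinh, div_mul_cancel₀ _ ha, sinh_arsinh, mul_div_cancel_left₀ _ ha]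

lemma cothGap_nonneg (ha : 0 < a) (hk : 0 < k) : 0 ≤ cothGap a k := by
  have hg := gridSinh_pos ha hk
  have hS := sinh_pos_iff.2 hk
  have hSg : sinh k ≤ gridSinh a k * cosh k := (sinh_le_mul_cosh_s16 hk.le).trans
    (mul_le_mul_of_nonneg_right (le_gridSinh ha hk.le) (cosh_pos k).le)
  rw [cothGap, sub_nonneg, div_le_div_iff₀ (by positivity) (by positivity)]
  nlinarith [mul_le_mul_of_nonneg_left hSg hg.le]

lemma hasDerivAt_cothGap (ha : 0 < a) (hk : 0 < k) :
    HasDerivAt (cothGap a)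
      (-(gridSinh a k ^ 2 + gridSinh a k * cosh (k * a) * sinh k * cosh k
          - 2 * cosh (k * a) * sinh k ^ 2) / (sinh k ^ 2 * gridSinh a k ^ 3)) k := by
  have hg := (gridSinh_pos ha hk).ne'
  have hS := (sinh_pos_iff.2 hk).ne'
  have hgd := hasDerivAt_gridSinh ha.ne' k
  have := ((hasDerivAt_cosh k).div ((hasDerivAt_sinh k).mul hgd) (mul_ne_zero hS hg)).sub
    ((hasDerivAt_const k (1 : ℝ)).div (hgd.pow 2) (pow_ne_zero 2 hg))
  refine this.congr_deriv ?_
  simp only [Pi.mul_apply, Pi.pow_apply]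
  norm_num
  field_simp
  linear_combination (-(gridSinh a k ^ 2)) * cosh_sq k

lemma antitoneOn_cothGap (ha : 0 < a) (ha1 : a ≤ 1) : AntitoneOn (cothGap a) (Ioi 0) := by
  refine antitoneOn_of_deriv_nonpos (convex_Ioi 0)
    (fun k hk => (hasDerivAt_cothGap ha hk).continuousAt.continuousWithinAt)
    (fun k hk => ?_) (fun k hk => ?_)
  all_goals rw [interior_Ioi] at hk
  · exact (hasDerivAt_cothGap ha hk).differentiableAt.differentiableWithinAt
  · rw [(hasDerivAt_cothGap ha hk).deriv]
    have hkey := two_mul_cosh_mul_sinh_sq_le (mul_pos hk ha) (mul_le_of_le_one_right hk.le ha1)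
    have hg : gridSinh a k = k * sinh (k * a) / (k * a) := by
      rw [gridSinh, mul_div_mul_left _ _ hk.ne']
    rw [← hg] at hkey
    have hgpos := gridSinh_pos ha hk
    have hS := sinh_pos_iff.2 hk
    refine div_nonpos_of_nonpos_of_nonneg ?_ (by positivity)
    linarith

lemma strictAntiOn_psi (ha : 0 < a) (ha1 : a ≤ 1) (hm : 0 < m + 1) :
    StrictAntiOn (psi a m) (Ioi 0) := by
  intro x hx y hy hxy
  have hg : gridSinh a x ^ 2 < gridSinh a y ^ 2 :=
    pow_lt_pow_left₀ (strictMono_gridSinh ha hxy) (gridSinh_pos ha hx).le two_ne_zero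
  have hmain : (m + 1) / gridSinh a y ^ 2 < (m + 1) / gridSinh a x ^ 2 :=
    div_lt_div_of_pos_left hm (pow_pos (gridSinh_pos ha hx) 2) hg
  exact add_lt_add_of_lt_of_le hmain (antitoneOn_cothGap ha ha1 hx hy hxy.le)

lemma continuousOn_psi (ha : 0 < a) : ContinuousOn (psi a m) (Ioi 0) := by
  intro k hk
  have hg := hasDerivAt_gridSinh ha.ne' k
  exact ((continuousAt_const.div (hg.continuousAt.pow 2)
    (pow_ne_zero 2 (gridSinh_pos ha hk).ne')).add
    (hasDerivAt_cothGap ha hk).continuousAt).continuousWithinAt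

lemma psi_le (ha : 0 < a) (hm : 0 < m + 1) (hk : 1 ≤ k) : psi a m k ≤ (m + 3) / k := by
  have hk0 : 0 < k := one_pos.trans_le hk
  have hg := le_gridSinh ha hk0.le
  have hgpos := gridSinh_pos ha hk0
  have hS := sinh_pos_iff.2 hk0
  have hmain : (m + 1) / gridSinh a k ^ 2 ≤ (m + 1) / k := by
    gcongr
    nlinarith
  have hcoth : cosh k / (sinh k * gridSinh a k) ≤ 2 / k := by
    rw [div_le_div_iff₀ (by positivity) hk0]
    nlinarith [cosh_le_two_mul_sinh hk, mul_le_mul_of_nonneg_left hg hS.le]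
  have hinv : 0 ≤ 1 / gridSinh a k ^ 2 := by positivity
  rw [psi, cothGap]
  calc _ ≤ (m + 1) / k + 2 / k := by linarith
    _ = (m + 3) / k := by ring

lemma exists_psi_eq (ha : 0 < a) (hm : 0 < m + 1) (hn : 0 < n) :
    ∃ k, 0 < k ∧ psi a m k = n := by
  set k₁ := arsinh (a * √((m + 1) / (2 * n))) / a
  have hk₁ : 0 < k₁ := div_pos (arsinh_pos_iff.2 (by positivity)) ha
  have hψ₁ : n ≤ psi a m k₁ := by
    have hg : gridSinh a k₁ ^ 2 = (m + 1) / (2 * n) := by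
      rw [gridSinh_arsinh_mul_div ha.ne', sq_sqrt (by positivity)]
    have hlow : (m + 1) / gridSinh a k₁ ^ 2 = 2 * n := by
      rw [hg]; field_simp
    rw [psi, hlow]
    linarith [cothGap_nonneg ha hk₁]
  set k₂ := max 1 ((m + 3) / n)
  have hk₂ : 1 ≤ k₂ := le_max_left _ _
  have hψ₂ : psi a m k₂ ≤ n := by
    refine (psi_le ha hm hk₂).trans ?_
    rw [div_le_iff₀ (one_pos.trans_le hk₂), mul_comm, ← div_le_iff₀ hn]
    exact le_max_right _ _
  exact isPreconnected_Ioi.intermediate_value (mem_Ioi.2 (one_pos.trans_le hk₂))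
    (mem_Ioi.2 hk₁) (continuousOn_psi ha) ⟨hψ₂, hψ₁⟩

lemma eq_zero_iff_psi_eq (ha : 0 < a) (hk : 0 < k) :
    (m - n * gridSinh a k ^ 2) * tanh k + gridSinh a k = 0 ↔ psi a m k = n := by
  have hg := (gridSinh_pos ha hk).ne'
  have hS := (sinh_pos_iff.2 hk).ne'
  have hC := (cosh_pos k).ne'
  have hfactor : (m - n * gridSinh a k ^ 2) * tanh k + gridSinh a k
      = sinh k * gridSinh a k ^ 2 / cosh k * (psi a m k - n) := by
    rw [psi, cothGap, tanh_eq_sinh_div_cosh]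
    field_simp
    ring
  rw [hfactor, mul_eq_zero, sub_eq_zero, or_iff_right]
  exact div_ne_zero (mul_ne_zero hS (pow_ne_zero 2 hg)) hC

end

/-- Robin boundary conditions, Case III (`n > 0`, `m + 1 > 0`, `0 < Δx ≤ 1`): the
hyperbolic characteristic function `f(k) = (m − n·sh(k)²)·tanh(k) + sh(k)`, with
`sh(k) = sinh(kΔx)/Δx`, has exactly one positive root. -/
theorem robin_case_III_unique_positive_root
    (Δx m n : ℝ) (hΔx0 : 0 < Δx) (hΔx1 : Δx ≤ 1) (hn : 0 < n) (hm : 0 < m + 1)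
    (sh : ℝ → ℝ) (hsh : ∀ k, sh k = Real.sinh (k * Δx) / Δx)
    (f : ℝ → ℝ) (hf : ∀ k, f k = (m - n * sh k ^ 2) * Real.tanh k + sh k) :
    ∃! k : ℝ, 0 < k ∧ f k = 0 := by
  have hroot : ∀ k, 0 < k → (f k = 0 ↔ psi Δx m k = n) := fun k hk => by
    rw [hf, show sh = gridSinh Δx from funext hsh]
    exact eq_zero_iff_psi_eq hΔx0 hk
  obtain ⟨k₀, hk₀, hψ₀⟩ := exists_psi_eq hΔx0 hm hn
  refine ⟨k₀, ⟨hk₀, (hroot k₀ hk₀).2 hψ₀⟩, fun k ⟨hk, hfk⟩ => ?_⟩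
  refine (strictAntiOn_psi hΔx0 hΔx1 hm).injOn hk hk₀ ?_
  rw [(hroot k hk).1 hfk, hψ₀]
end

section
/- Let Δx > 0 and n be real numbers, set sh(k) = sinh(kΔx)/Δx, and define f(k) = (−1 − n·sh(k)²)·tanh(k) + sh(k) (the case m = −1). Then f(0) = 0, f'(0) = 0, f''(0) = 0, and f'''(0) = 2 − 6n + Δx², where the derivatives are the first, second and third derivatives of f at 0. -/
/-!
The values at a point of a function and its first three derivatives obey the Leibniz rule,
so they can be computed block by block. At `0`, both `sh` and `tanh` have the data
`(0, 1, 0, ·)`, with third derivatives `Δx²` and `-2` (for `tanh` read off from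
`tanh' = 1 - tanh²`). Hence `-1 - n·sh²` has the data `(-1, 0, -2n, 0)`, and
`f'''(0) = (-1)(-2) + 3(-2n)(1) + Δx² = 2 - 6n + Δx²`, while the lower derivatives vanish.
-/

open Real

section Jet

variable {𝕜 : Type*} [NontriviallyNormedField 𝕜] {f g : 𝕜 → 𝕜}
  {x a₀ a₁ a₂ a₃ b₀ b₁ b₂ b₃ : 𝕜}

structure HasThreeJetAt (f : 𝕜 → 𝕜) (x a₀ a₁ a₂ a₃ : 𝕜) : Prop where
  contDiffAt : ContDiffAt 𝕜 3 f x
  apply_eq : f x = a₀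
  deriv_eq : deriv f x = a₁
  iteratedDeriv_two_eq : iteratedDeriv 2 f x = a₂
  iteratedDeriv_three_eq : iteratedDeriv 3 f x = a₃

namespace HasThreeJetAt

theorem differentiableAt (hf : HasThreeJetAt f x a₀ a₁ a₂ a₃) : DifferentiableAt 𝕜 f x :=
  hf.contDiffAt.differentiableAt (by norm_num)

theorem const (c : 𝕜) : HasThreeJetAt (fun _ ↦ c) x c 0 0 0 where
  contDiffAt := contDiffAt_const
  apply_eq := rfl
  deriv_eq := deriv_const x c
  iteratedDeriv_two_eq := by simp [iteratedDeriv_const]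
  iteratedDeriv_three_eq := by simp [iteratedDeriv_const]

theorem add (hf : HasThreeJetAt f x a₀ a₁ a₂ a₃) (hg : HasThreeJetAt g x b₀ b₁ b₂ b₃) :
    HasThreeJetAt (fun y ↦ f y + g y) x (a₀ + b₀) (a₁ + b₁) (a₂ + b₂) (a₃ + b₃) where
  contDiffAt := hf.contDiffAt.add hg.contDiffAt
  apply_eq := by rw [hf.apply_eq, hg.apply_eq]
  deriv_eq := by
    rw [deriv_fun_add hf.differentiableAt hg.differentiableAt, hf.deriv_eq, hg.deriv_eq]
  iteratedDeriv_two_eq := by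
    rw [iteratedDeriv_fun_add (hf.contDiffAt.of_le (by norm_num))
      (hg.contDiffAt.of_le (by norm_num)),
      hf.iteratedDeriv_two_eq, hg.iteratedDeriv_two_eq]
  iteratedDeriv_three_eq := by
    rw [iteratedDeriv_fun_add hf.contDiffAt hg.contDiffAt,
      hf.iteratedDeriv_three_eq, hg.iteratedDeriv_three_eq]

theorem sub (hf : HasThreeJetAt f x a₀ a₁ a₂ a₃) (hg : HasThreeJetAt g x b₀ b₁ b₂ b₃) :
    HasThreeJetAt (fun y ↦ f y - g y) x (a₀ - b₀) (a₁ - b₁) (a₂ - b₂) (a₃ - b₃) where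
  contDiffAt := hf.contDiffAt.sub hg.contDiffAt
  apply_eq := by rw [hf.apply_eq, hg.apply_eq]
  deriv_eq := by
    rw [deriv_fun_sub hf.differentiableAt hg.differentiableAt, hf.deriv_eq, hg.deriv_eq]
  iteratedDeriv_two_eq := by
    rw [iteratedDeriv_fun_sub (hf.contDiffAt.of_le (by norm_num))
      (hg.contDiffAt.of_le (by norm_num)),
      hf.iteratedDeriv_two_eq, hg.iteratedDeriv_two_eq]
  iteratedDeriv_three_eq := by
    rw [iteratedDeriv_fun_sub hf.contDiffAt hg.contDiffAt,
      hf.iteratedDeriv_three_eq, hg.iteratedDeriv_three_eq]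

theorem mul (hf : HasThreeJetAt f x a₀ a₁ a₂ a₃) (hg : HasThreeJetAt g x b₀ b₁ b₂ b₃) :
    HasThreeJetAt (fun y ↦ f y * g y) x (a₀ * b₀) (a₁ * b₀ + a₀ * b₁)
      (a₂ * b₀ + 2 * a₁ * b₁ + a₀ * b₂) (a₃ * b₀ + 3 * a₂ * b₁ + 3 * a₁ * b₂ + a₀ * b₃) where
  contDiffAt := hf.contDiffAt.mul hg.contDiffAt
  apply_eq := by rw [hf.apply_eq, hg.apply_eq]
  deriv_eq := by
    rw [deriv_fun_mul hf.differentiableAt hg.differentiableAt, hf.deriv_eq, hg.deriv_eq,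
      hf.apply_eq, hg.apply_eq]
  iteratedDeriv_two_eq := by
    rw [iteratedDeriv_fun_mul (hf.contDiffAt.of_le (by norm_num))
      (hg.contDiffAt.of_le (by norm_num))]
    simp only [Finset.sum_range_succ, Finset.sum_range_zero, Nat.reduceSub, iteratedDeriv_zero,
      iteratedDeriv_one, Nat.choose_zero_right, Nat.choose_one_right, Nat.choose_self,
      hf.apply_eq, hf.deriv_eq, hf.iteratedDeriv_two_eq,
      hg.apply_eq, hg.deriv_eq, hg.iteratedDeriv_two_eq]
    push_cast
    ring
  iteratedDeriv_three_eq := by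
    rw [iteratedDeriv_fun_mul hf.contDiffAt hg.contDiffAt]
    simp only [Finset.sum_range_succ, Finset.sum_range_zero, Nat.reduceSub, iteratedDeriv_zero,
      iteratedDeriv_one, Nat.choose_zero_right, Nat.choose_one_right, Nat.choose_succ_self_right,
      Nat.choose_self, hf.apply_eq, hf.deriv_eq, hf.iteratedDeriv_two_eq, hf.iteratedDeriv_three_eq,
      hg.apply_eq, hg.deriv_eq, hg.iteratedDeriv_two_eq, hg.iteratedDeriv_three_eq]
    push_cast
    ring

end HasThreeJetAt

end Jet

namespace Real

theorem hasDerivAt_tanh_s18 (x : ℝ) : HasDerivAt tanh (1 - tanh x ^ 2) x := by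
  have h := (hasDerivAt_sinh x).div (hasDerivAt_cosh x) (cosh_pos x).ne'
  rw [show sinh / cosh = tanh from funext fun y ↦ (tanh_eq_sinh_div_cosh y).symm] at h
  refine h.congr_deriv ?_
  rw [tanh_eq_sinh_div_cosh]
  field_simp

theorem deriv_tanh : deriv tanh = fun x ↦ 1 - tanh x ^ 2 :=
  funext fun x ↦ (hasDerivAt_tanh_s18 x).deriv

theorem contDiff_tanh {n : WithTop ℕ∞} : ContDiff ℝ n tanh := by
  rw [show tanh = sinh / cosh from funext tanh_eq_sinh_div_cosh]
  exact contDiff_sinh.div contDiff_cosh fun x ↦ (cosh_pos x).ne'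

end Real

theorem hasThreeJetAt_tanh_zero : HasThreeJetAt tanh 0 0 1 0 (-2) := by
  have hjet : HasThreeJetAt tanh 0 0 1 (iteratedDeriv 2 tanh 0) (iteratedDeriv 3 tanh 0) :=
    ⟨contDiff_tanh.contDiffAt, tanh_zero, by simp [deriv_tanh], rfl, rfl⟩
  -- The unknown entries of `hjet` enter the jet of `tanh' = 1 - tanh²` only multiplied by
  -- `tanh 0 = 0`, so it determines them.
  have hderiv := (HasThreeJetAt.const 1).sub (hjet.mul hjet)
  have hderiv_eq : deriv tanh = fun x ↦ 1 - tanh x * tanh x := by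
    simp only [deriv_tanh, sq]
  have h₂ : iteratedDeriv 2 tanh 0 = 0 := by
    rw [iteratedDeriv_succ', iteratedDeriv_one, hderiv_eq, hderiv.deriv_eq]; ring
  have h₃ : iteratedDeriv 3 tanh 0 = -2 := by
    rw [iteratedDeriv_succ', hderiv_eq, hderiv.iteratedDeriv_two_eq]; ring
  rwa [h₂, h₃] at hjet

theorem hasThreeJetAt_sinh_mul_div_zero {c : ℝ} (hc : c ≠ 0) :
    HasThreeJetAt (fun k ↦ sinh (k * c) / c) 0 0 1 0 (c ^ 2) := by
  have hcomp (m : ℕ) :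
      iteratedDeriv m (fun k ↦ sinh (k * c) / c) 0 = c ^ m * iteratedDeriv m sinh 0 / c := by
    simp_rw [mul_comm _ c]
    rw [iteratedDeriv_div_const, iteratedDeriv_comp_const_mul contDiff_sinh]
    simp only [mul_zero]
  refine ⟨by fun_prop, by simp, ?_, ?_, ?_⟩
  · rw [← iteratedDeriv_one, hcomp]; field_simp; simp
  · rw [hcomp]; simp
  · rw [hcomp]; field_simp; simp

/-- Robin boundary conditions, degenerate case `m = −1`: the function
`f(k) = (−1 − n·sh(k)²)·tanh(k) + sh(k)`, with `sh(k) = sinh(kΔx)/Δx`, satisfies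
`f(0) = 0`, `f'(0) = 0`, `f''(0) = 0` and `f'''(0) = 2 − 6n + Δx²`. -/
theorem robin_degenerate_third_order_root
    (Δx n : ℝ) (hΔx : 0 < Δx)
    (sh : ℝ → ℝ) (hsh : ∀ k, sh k = Real.sinh (k * Δx) / Δx)
    (f : ℝ → ℝ) (hf : ∀ k, f k = (-1 - n * sh k ^ 2) * Real.tanh k + sh k) :
    f 0 = 0 ∧ deriv f 0 = 0 ∧ iteratedDeriv 2 f 0 = 0 ∧
    iteratedDeriv 3 f 0 = 2 - 6 * n + Δx ^ 2 := by
  have hsh_jet : HasThreeJetAt sh 0 0 1 0 (Δx ^ 2) := by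
    rw [funext hsh]
    exact hasThreeJetAt_sinh_mul_div_zero hΔx.ne'
  have hf_jet : HasThreeJetAt f 0 0 0 0 (2 - 6 * n + Δx ^ 2) := by
    rw [show f = fun k ↦ (-1 - n * (sh k * sh k)) * tanh k + sh k from
      funext fun k ↦ by rw [hf, sq]]
    convert (((HasThreeJetAt.const (-1)).sub ((HasThreeJetAt.const n).mul
      (hsh_jet.mul hsh_jet))).mul hasThreeJetAt_tanh_zero).add hsh_jet using 1 <;> ring
  exact ⟨hf_jet.apply_eq, hf_jet.deriv_eq, hf_jet.iteratedDeriv_two_eq,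
    hf_jet.iteratedDeriv_three_eq⟩
end
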